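/- Let φ be the involution on enhanced states mapping a state S of a diagram D to the state φ(S) of the mirror diagram D̄ obtained by reversing all crossing markers and all circle labels. Then φ intertwines the transpose differential d̃ on C(D) with the differential d^+ on C(D̄): φ ∘ d̃ = d^+ ∘ φ. Consequently H^{i,j,s}(D) ≅ H_{-i,-j,-s}(D̄). -/

import Mathlib

/-- The subgroup of the free abelian group on enhanced states spanned by
states of a fixed tri-grading `(i, j, σ)`. -/
noncomputable def gradedPart {S A : Type*} (gI gJ : S → ℤ) (gS : S → A)
    (i j : ℤ) (σ : A) : AddSubgroup (S →₀ ℤ) where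
  carrier := {x | ∀ s ∈ x.support, gI s = i ∧ gJ s = j ∧ gS s = σ}
  zero_mem' := by simp
  add_mem' := by
    intro a b ha hb s hs
    classical
    rcases Finset.mem_union.mp (Finsupp.support_add hs) with h | h
    · exact ha s h
    · exact hb s h
  neg_mem' := by
    intro a ha s hs
    exact ha s (by simpa using hs)

/-- Homology: cycles `Z` modulo boundaries `B`. -/
abbrev khHomology {S : Type*} (Z B : AddSubgroup (S →₀ ℤ)) : Type _ :=
  Z ⧸ B.addSubgroupOf Z

/-! On the free abelian groups of states, `φ` is the relabelling isomorphism `Finsupp.domCongr e`.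
The hypotheses `[S:T]_v = [φT:φS]_v̄` and `t(S,v) = t⁺(φS,v̄)` say exactly that it carries the
matrix of the transpose differential `d̃` to that of `d⁺`, so `φ` is an isomorphism of chain
complexes. Since `φ` also negates all three gradings, it maps the cycles and boundaries of
tridegree `(i, j, s)` onto those of tridegree `(-i, -j, -s)` and so induces the isomorphism of
the quotients. -/

open Finsupp

section
variable {S T A N : Type*}

lemma Finsupp.addHom_ext_single_one [AddMonoid N] {f g : (S →₀ ℤ) →+ N}
    (h : ∀ s, f (single s 1) = g (single s 1)) : f = g :=
  addHom_ext' fun s => AddMonoidHom.ext_int (h s)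

lemma Finsupp.domCongr_comp_eq_comp_domCongr [Fintype S] [Fintype T] (e : S ≃ T)
    {d : (S →₀ ℤ) →+ (S →₀ ℤ)} {d' : (T →₀ ℤ) →+ (T →₀ ℤ)} {c : S → S → ℤ} {c' : T → T → ℤ}
    (hd : ∀ s, d (single s 1) = ∑ s', c s s' • single s' 1)
    (hd' : ∀ t, d' (single t 1) = ∑ t', c' t t' • single t' 1)
    (hc : ∀ s s', c s s' = c' (e s) (e s')) :
    (Finsupp.domCongr (M := ℤ) e : (S →₀ ℤ) →+ (T →₀ ℤ)).comp d =
      d'.comp (Finsupp.domCongr (M := ℤ) e : (S →₀ ℤ) →+ (T →₀ ℤ)) := by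
  refine addHom_ext_single_one fun s => ?_
  simp only [AddMonoidHom.comp_apply, AddMonoidHom.coe_coe, hd, map_sum, map_zsmul,
    Finsupp.domCongr_apply, equivMapDomain_single, hd', hc]
  exact e.sum_comp (fun t' => c' (e s) t' • single t' 1)

lemma mem_gradedPart_iff {gI gJ : S → ℤ} {gS : S → A} {i j : ℤ} {σ : A} {x : S →₀ ℤ} :
    x ∈ gradedPart gI gJ gS i j σ ↔ ∀ s, x s ≠ 0 → gI s = i ∧ gJ s = j ∧ gS s = σ := by
  simp only [← Finsupp.mem_support_iff]
  rfl

lemma gradedPart_map_domCongr [AddCommGroup A] (e : S ≃ T) {gI gJ : S → ℤ} {gS : S → A}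
    {gIb gJb : T → ℤ} {gSb : T → A} (hgI : ∀ s, gIb (e s) = -gI s)
    (hgJ : ∀ s, gJb (e s) = -gJ s) (hgS : ∀ s, gSb (e s) = -gS s) (i j : ℤ) (σ : A) :
    (gradedPart gI gJ gS i j σ).map (Finsupp.domCongr (M := ℤ) e : (S →₀ ℤ) →+ (T →₀ ℤ)) =
      gradedPart gIb gJb gSb (-i) (-j) (-σ) := by
  ext y
  rw [AddSubgroup.map_equiv_eq_comap_symm, AddSubgroup.mem_comap, mem_gradedPart_iff,
    mem_gradedPart_iff, ← e.forall_congr_right]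
  simp [hgI, hgJ, hgS]

lemma AddMonoidHom.map_ker_of_comp_eq {M M' P P' : Type*} [AddGroup M] [AddGroup M'] [AddGroup P]
    [AddGroup P'] (F : M ≃+ M') {G : P →+ P'} (hG : Function.Injective G) {f : M →+ P}
    {f' : M' →+ P'} (h : G.comp f = f'.comp (F : M →+ M')) :
    f.ker.map (F : M →+ M') = f'.ker := by
  ext y
  have hy : f' y = G (f (F.symm y)) := by
    simpa using (DFunLike.congr_fun h (F.symm y)).symm
  rw [AddSubgroup.map_equiv_eq_comap_symm, AddSubgroup.mem_comap, mem_ker, mem_ker, hy,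
    map_eq_zero_iff G hG]
  rfl

end

lemma AddSubgroup.map_addSubgroupOf_addSubgroupMap {M M' : Type*} [AddGroup M] [AddGroup M']
    (F : M ≃+ M') (Z B : AddSubgroup M) :
    (B.addSubgroupOf Z).map (F.addSubgroupMap Z).toAddMonoidHom =
      (B.map (F : M →+ M')).addSubgroupOf (Z.map (F : M →+ M')) := by
  ext y
  rw [AddSubgroup.mem_map_equiv, AddSubgroup.mem_addSubgroupOf, AddSubgroup.mem_addSubgroupOf]
  exact AddSubgroup.mem_map_equiv.symm

def AddEquiv.quotientAddSubgroupOfCongr {M M' : Type*} [AddCommGroup M] [AddCommGroup M']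
    (F : M ≃+ M') {Z B : AddSubgroup M} {Z' B' : AddSubgroup M'}
    (hZ : Z.map (F : M →+ M') = Z') (hB : B.map (F : M →+ M') = B') :
    (Z ⧸ B.addSubgroupOf Z) ≃+ (Z' ⧸ B'.addSubgroupOf Z') := by
  subst hZ hB
  exact QuotientAddGroup.congr _ _ (F.addSubgroupMap Z)
    (AddSubgroup.map_addSubgroupOf_addSubgroupMap F Z B)

/-- The involution `φ` sending a state of `D` to the state of the
mirror diagram `D̄` with all markers and circle labels reversed intertwines the
transpose differential `d̃` on `C(D)` with `d⁺` on `C(D̄)`: `φ ∘ d̃ = d⁺ ∘ φ`.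
Consequently `H^{i,j,s}(D) ≅ H_{-i,-j,-s}(D̄)`, where the cohomology of `D` is
computed as the homology of `(C(D), d̃)` (with `d̃` raising `i` by 2) and the
homology of `D̄` is computed from `d⁺` (lowering `i` by 2). -/
theorem stmt_4
    {S Sb V A : Type*} [Fintype S] [Fintype Sb] [Fintype V] [AddCommGroup A]
    (e : S ≃ Sb)
    (inc : S → S → V → ℤ) (incb : Sb → Sb → V → ℤ)
    (t : S → V → ℕ) (tplusb : Sb → V → ℕ)
    -- incidence numbers satisfy [S:T]_v = [φ(T):φ(S)]_{v̄}
    (hinc : ∀ s s' v, inc s s' v = incb (e s') (e s) v)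
    -- t(S,v) = t⁺(φ(S), v̄)
    (hts : ∀ s v, t s v = tplusb (e s) v)
    -- gradings I, J, s, negated by φ
    (gI gJ : S → ℤ) (gS : S → A) (gIb gJb : Sb → ℤ) (gSb : Sb → A)
    (hgI : ∀ s, gIb (e s) = - gI s) (hgJ : ∀ s, gJb (e s) = - gJ s)
    (hgS : ∀ s, gSb (e s) = - gS s)
    (dtilde : (S →₀ ℤ) →+ (S →₀ ℤ)) (dplus : (Sb →₀ ℤ) →+ (Sb →₀ ℤ))
    (hdt : ∀ s : S, dtilde (Finsupp.single s 1) =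
        ∑ s' : S, ∑ v : V, (((-1 : ℤ) ^ t s v) * inc s' s v) • Finsupp.single s' 1)
    (hdp : ∀ s : Sb, dplus (Finsupp.single s 1) =
        ∑ s' : Sb, ∑ v : V, (((-1 : ℤ) ^ tplusb s v) * incb s s' v) • Finsupp.single s' 1)
    (Φ : (S →₀ ℤ) →+ (Sb →₀ ℤ))
    (hΦ : ∀ s : S, Φ (Finsupp.single s 1) = Finsupp.single (e s) 1) :
    Φ.comp dtilde = dplus.comp Φ
      ∧ ∀ (i j : ℤ) (σ : A), Nonempty
        (khHomology (gradedPart gI gJ gS i j σ ⊓ dtilde.ker)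
            (AddSubgroup.map dtilde (gradedPart gI gJ gS (i - 2) j σ)) ≃+
         khHomology (gradedPart gIb gJb gSb (-i) (-j) (-σ) ⊓ dplus.ker)
            (AddSubgroup.map dplus (gradedPart gIb gJb gSb (-i + 2) (-j) (-σ)))) := by
  set E : (S →₀ ℤ) ≃+ (Sb →₀ ℤ) := Finsupp.domCongr e
  have hΦE : Φ = E := addHom_ext_single_one fun s => by simp [E, hΦ]
  have hcomm : (E : (S →₀ ℤ) →+ (Sb →₀ ℤ)).comp dtilde = dplus.comp E := by
    refine domCongr_comp_eq_comp_domCongr e (c := fun s s' => ∑ v, (-1) ^ t s v * inc s' s v)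
      (c' := fun s s' => ∑ v, (-1) ^ tplusb s v * incb s s' v) ?_ ?_ ?_
    · simpa only [Finset.sum_smul] using hdt
    · simpa only [Finset.sum_smul] using hdp
    · simp [hinc, hts]
  refine ⟨hΦE ▸ hcomm, fun i j σ => ⟨AddEquiv.quotientAddSubgroupOfCongr E ?_ ?_⟩⟩
  · rw [AddSubgroup.map_inf_eq _ _ _ E.injective, gradedPart_map_domCongr e hgI hgJ hgS,
      AddMonoidHom.map_ker_of_comp_eq E E.injective hcomm]
  · rw [AddSubgroup.map_map, hcomm, ← AddSubgroup.map_map, gradedPart_map_domCongr e hgI hgJ hgS,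
      neg_sub', sub_neg_eq_add]
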